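/- arXiv:1802.05990 — 2 statements merged into one kernel-verified Lean document; each statement's English description precedes it below -/
import Mathlib

section
/- For all positive integers n, the determinant of the n×n Hankel matrix whose (i,j) entry is the Motzkin number M_{i+j+1} equals (-1)^{n/3} if n ≡ 0 (mod 3), (-1)^{(n-1)/3} if n ≡ 1 (mod 3), and 0 if n ≡ 2 (mod 3). -/
/- The Motzkin number `M n`: the number of lattice paths from `(0,0)` to `(n,0)` with
steps `(1,1)`, `(1,0)`, `(1,-1)` that never go below the x-axis. -/
open scoped Classical in
noncomputable def motzkin (n : ℕ) : ℕ :=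
  (Finset.univ.filter (fun f : Fin n → Fin 3 =>
    (∑ i, (1 - ((f i : ℕ) : ℤ))) = 0 ∧
    ∀ m : ℕ, m ≤ n →
      0 ≤ ∑ i ∈ Finset.univ.filter (fun i : Fin n => (i : ℕ) < m),
        (1 - ((f i : ℕ) : ℤ)))).card

/-! Let `p N k` be the number of Motzkin prefixes of length `N` ending at height `k` (the Motzkin
triangle), so that `M N = p N 0` and `p (N + 1) k = p N (k - 1) + p N k + p N (k + 1)` for `k ≥ 0`.
Since this tridiagonal recurrence is symmetric, `∑ₖ p a k * p b k` only depends on `a + b`, hence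
equals `M (a + b)`. With `A = (p i k)`, which is unitriangular, and `T` the all-ones tridiagonal
matrix, the recurrence reads `(p (j + 1) k) = A T`, so the shifted Hankel matrix is `A (A T)ᵀ` and
has determinant `det T`. Laplace expansion gives `det T_(n+2) = det T_(n+1) - det T_n`, whence the
period-6 pattern `1, 1, 0, -1, -1, 0`. -/

namespace Motzkin

open Finset Matrix

def step (v : Fin 3) : ℤ := 1 - (v : ℕ)

def height {N : ℕ} (f : Fin N → Fin 3) (m : ℕ) : ℤ :=
  ∑ i ∈ univ.filter (fun i : Fin N => (i : ℕ) < m), step (f i)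

def IsMotzkinPrefix {N : ℕ} (f : Fin N → Fin 3) (k : ℤ) : Prop :=
  height f N = k ∧ ∀ m ≤ N, 0 ≤ height f m

open scoped Classical in
noncomputable def pathCount (N : ℕ) (k : ℤ) : ℕ := #{f : Fin N → Fin 3 | IsMotzkinPrefix f k}

lemma height_of_le {N m : ℕ} (f : Fin N → Fin 3) (hm : N ≤ m) :
    height f m = ∑ i, step (f i) := by
  rw [height, filter_true_of_mem fun i _ => i.2.trans_le hm]

lemma height_snoc {N : ℕ} (f : Fin N → Fin 3) (v : Fin 3) (m : ℕ) :
    height (Fin.snoc f v : Fin (N + 1) → Fin 3) m = height f m + if N < m then step v else 0 := by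
  simp only [height, sum_filter, Fin.sum_univ_castSucc, Fin.snoc_castSucc, Fin.snoc_last,
    Fin.val_castSucc, Fin.val_last]

lemma isMotzkinPrefix_snoc_iff {N : ℕ} {k : ℤ} (hk : 0 ≤ k) (f : Fin N → Fin 3) (v : Fin 3) :
    IsMotzkinPrefix (Fin.snoc f v : Fin (N + 1) → Fin 3) k ↔ IsMotzkinPrefix f (k - step v) := by
  have hN : height f (N + 1) = height f N := by
    rw [height_of_le f le_rfl, height_of_le f N.le_succ]
  simp only [IsMotzkinPrefix, height_snoc, hN, Nat.lt_succ_self, if_true]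
  constructor
  · rintro ⟨h, hpos⟩
    refine ⟨by omega, fun m hm => ?_⟩
    simpa [show ¬N < m by omega] using hpos m (by omega)
  · rintro ⟨h, hpos⟩
    refine ⟨by omega, fun m hm => ?_⟩
    rcases hm.lt_or_eq with hm | rfl
    · simpa [show ¬N < m by omega] using hpos m (by omega)
    · simp only [hN, Nat.lt_succ_self, if_true]
      omega

lemma motzkin_eq_pathCount (n : ℕ) : motzkin n = pathCount n 0 := by
  unfold motzkin pathCount IsMotzkinPrefix
  congr 1
  ext f
  simp only [mem_filter, mem_univ, true_and, height_of_le f le_rfl]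
  rfl

lemma pathCount_zero (k : ℤ) : pathCount 0 k = if k = 0 then 1 else 0 := by
  by_cases hk : k = 0 <;> simp [pathCount, IsMotzkinPrefix, height, hk, eq_comm]

lemma pathCount_succ (N : ℕ) {k : ℤ} (hk : 0 ≤ k) :
    pathCount (N + 1) k = pathCount N (k - 1) + pathCount N k + pathCount N (k + 1) := by
  have last_step : pathCount (N + 1) k = ∑ v, pathCount N (k - step v) := by
    classical
    simp only [pathCount, card_filter]
    rw [← (Fin.snocEquiv fun _ => Fin 3).sum_comp, Fintype.sum_prod_type]
    exact Fintype.sum_congr _ _ fun v => Fintype.sum_congr _ _ fun f =>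
      if_congr (isMotzkinPrefix_snoc_iff hk f v) rfl rfl
  rw [last_step, Fin.sum_univ_three]
  simp [step]

lemma pathCount_of_neg {N : ℕ} {k : ℤ} (hk : k < 0) : pathCount N k = 0 := by
  simp only [pathCount, card_eq_zero, filter_eq_empty_iff]
  rintro f - ⟨rfl, hf⟩
  exact (hf N le_rfl).not_gt hk

lemma pathCount_of_lt {N : ℕ} {k : ℤ} (hk : N < k) : pathCount N k = 0 := by
  induction N generalizing k with
  | zero => rw [pathCount_zero, if_neg (by simpa using hk.ne')]
  | succ N ih =>
    push_cast at hk
    rw [pathCount_succ N (by omega), ih (by omega), ih (by omega), ih (by omega)]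

lemma pathCount_self (N : ℕ) : pathCount N N = 1 := by
  induction N with
  | zero => simp [pathCount_zero]
  | succ N ih =>
    rw [pathCount_succ N (by positivity)]
    push_cast
    rw [add_sub_cancel_right, ih, pathCount_of_lt (by omega), pathCount_of_lt (by omega)]

lemma support_pathCount (N : ℕ) :
    Function.support (fun k => (pathCount N k : ℤ)) ⊆ Set.Icc 0 N := by
  intro k hk
  by_contra h
  rw [Set.mem_Icc, not_and_or, not_le, not_le] at h
  rcases h with h | h <;> simp [pathCount_of_neg, pathCount_of_lt, h] at hk

lemma hasFiniteSupport_pathCount (N : ℕ) :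
    Function.HasFiniteSupport (fun k => (pathCount N k : ℤ)) :=
  (Set.finite_Icc _ _).subset (support_pathCount N)

lemma support_pathCount_mul_subset {n : ℕ} (i : Fin n) (w : ℤ → ℤ) :
    Function.support (fun k => (pathCount i k : ℤ) * w k) ⊆ Set.Ico 0 n := fun k hk =>
  have hk := support_pathCount i (Function.support_mul_subset_left _ _ hk)
  ⟨hk.1, hk.2.trans_lt (by exact_mod_cast i.2)⟩

lemma finsum_tridiagonal_mul_eq_mul_tridiagonal {R : Type*} [Semiring R] {u v : ℤ → R}
    (hu : Function.HasFiniteSupport u) (hv : Function.HasFiniteSupport v) :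
    ∑ᶠ k, (u (k - 1) + u k + u (k + 1)) * v k = ∑ᶠ k, u k * (v (k - 1) + v k + v (k + 1)) := by
  have shift (w : ℤ → R) : ∑ᶠ k, w (k + 1) = ∑ᶠ k, w k := finsum_comp_equiv (Equiv.addRight 1)
  have down : ∑ᶠ k, u (k - 1) * v k = ∑ᶠ k, u k * v (k + 1) := by
    simpa using (shift fun k => u (k - 1) * v k).symm
  have up : ∑ᶠ k, u (k + 1) * v k = ∑ᶠ k, u k * v (k - 1) := by
    simpa using shift fun k => u k * v (k - 1)
  simp only [add_mul, mul_add]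
  rw [finsum_add_distrib (by fun_prop) (by fun_prop), finsum_add_distrib (by fun_prop) (by fun_prop),
    finsum_add_distrib (by fun_prop) (by fun_prop), finsum_add_distrib (by fun_prop) (by fun_prop),
    down, up]
  abel

lemma pathCount_succ_mul (N M : ℕ) (k : ℤ) :
    (pathCount (N + 1) k : ℤ) * pathCount M k =
      (pathCount N (k - 1) + pathCount N k + pathCount N (k + 1) : ℤ) * pathCount M k := by
  rcases lt_or_ge k 0 with hk | hk
  · simp [pathCount_of_neg hk]
  · rw [pathCount_succ N hk]
    push_cast
    rfl

lemma finsum_pathCount_succ_mul (a b : ℕ) :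
    ∑ᶠ k, (pathCount (a + 1) k : ℤ) * pathCount b k =
      ∑ᶠ k, (pathCount a k : ℤ) * pathCount (b + 1) k := by
  simp only [pathCount_succ_mul a b, mul_comm (pathCount a _ : ℤ), pathCount_succ_mul b a]
  rw [finsum_tridiagonal_mul_eq_mul_tridiagonal (hasFiniteSupport_pathCount a) (hasFiniteSupport_pathCount b)]
  simp only [mul_comm]

lemma pathCount_add_eq_finsum_mul (a b : ℕ) :
    (pathCount (a + b) 0 : ℤ) = ∑ᶠ k, (pathCount a k : ℤ) * pathCount b k := by
  induction a generalizing b with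
  | zero =>
    rw [finsum_eq_single _ 0 fun k hk => by simp [pathCount_zero, hk]]
    simp [pathCount_zero]
  | succ a ih => rw [finsum_pathCount_succ_mul, ← ih, Nat.add_right_comm, Nat.add_assoc]

lemma sum_fin_eq_finsum {M : Type*} [AddCommMonoid M] {n : ℕ} {w : ℤ → M}
    (hw : Function.support w ⊆ Set.Ico 0 n) : ∑ l : Fin n, w l = ∑ᶠ l, w l := by
  rw [finsum_eq_sum_of_support_subset w (s := (range n).map Nat.castEmbedding), sum_map,
    ← Fin.sum_univ_eq_sum_range]
  · rfl
  intro k hk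
  obtain ⟨h0, hn⟩ := hw hk
  simp only [coe_map, coe_range, Set.mem_image, Set.mem_Iio, Nat.castEmbedding_apply]
  exact ⟨k.toNat, by omega, by omega⟩

lemma finsum_mul_ite_abs_sub_le_one {R : Type*} [Semiring R] (u : ℤ → R) (k : ℤ) :
    ∑ᶠ l, u l * (if |l - k| ≤ 1 then 1 else 0) = u (k - 1) + u k + u (k + 1) := by
  rw [finsum_eq_sum_of_support_subset _ (s := {k - 1, k, k + 1})]
  · rw [sum_insert (by simp; omega), sum_pair (by omega)]
    simp [add_assoc]
  intro l hl
  simp only [Function.mem_support, ne_eq, mul_ite, mul_one, mul_zero, ite_eq_right_iff,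
    Classical.not_imp, abs_le] at hl
  simp only [coe_insert, coe_singleton, Set.mem_insert_iff, Set.mem_singleton_iff]
  omega

noncomputable def pathMatrix (n : ℕ) : Matrix (Fin n) (Fin n) ℤ := Matrix.of fun i k => pathCount i (k : ℕ)

def tridiagonal (n : ℕ) : Matrix (Fin n) (Fin n) ℤ :=
  Matrix.of fun k l => if |((k : ℕ) : ℤ) - (l : ℕ)| ≤ 1 then 1 else 0

lemma tridiagonal_apply {n : ℕ} (k l : Fin n) :
    tridiagonal n k l = if (k : ℕ) ≤ l + 1 ∧ (l : ℕ) ≤ k + 1 then 1 else 0 := by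
  simp only [tridiagonal, of_apply, abs_le]
  congr 1
  apply propext
  omega

lemma det_pathMatrix (n : ℕ) : (pathMatrix n).det = 1 := by
  rw [det_of_isLowerTriangular _ fun i k hik => by
    have : i < k := OrderDual.toDual_lt_toDual.1 hik
    simp [pathMatrix, pathCount_of_lt (Nat.cast_lt.2 this)]]
  simp [pathMatrix, pathCount_self]

lemma pathMatrix_mul_tridiagonal_apply {n : ℕ} (i k : Fin n) :
    (pathMatrix n * tridiagonal n) i k = pathCount (i + 1) (k : ℕ) := by
  rw [mul_apply]
  simp only [pathMatrix, tridiagonal, of_apply]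
  rw [sum_fin_eq_finsum (support_pathCount_mul_subset i fun l => if |l - (k : ℕ)| ≤ 1 then 1 else 0),
    finsum_mul_ite_abs_sub_le_one,
    pathCount_succ _ (by positivity)]
  push_cast
  rfl

lemma hankel_eq_pathMatrix_mul (n : ℕ) :
    Matrix.of (fun i j : Fin n => (motzkin (i.1 + j.1 + 1) : ℤ)) =
      pathMatrix n * (pathMatrix n * tridiagonal n)ᵀ := by
  ext i j
  rw [mul_apply]
  simp only [transpose_apply, pathMatrix_mul_tridiagonal_apply]
  simp only [pathMatrix, of_apply]
  rw [sum_fin_eq_finsum (w := fun k => (pathCount i k : ℤ) * pathCount (j + 1) k)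
    (support_pathCount_mul_subset i _), ← pathCount_add_eq_finsum_mul, motzkin_eq_pathCount,
    Nat.add_assoc]

lemma tridiagonal_submatrix_succ (n : ℕ) :
    (tridiagonal (n + 1)).submatrix Fin.succ Fin.succ = tridiagonal n := by
  ext k l
  simp [tridiagonal_apply]

lemma det_tridiagonal_add_two (n : ℕ) :
    (tridiagonal (n + 2)).det = (tridiagonal (n + 1)).det - (tridiagonal n).det := by
  have minor : ((tridiagonal (n + 2)).submatrix Fin.succ (Fin.succAbove 1)).det =
      (tridiagonal n).det := by
    rw [det_succ_column_zero, Fin.sum_univ_succ,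
      sum_eq_zero fun i _ => by simp [tridiagonal_apply, Fin.succAbove]]
    have corner : (tridiagonal (n + 2)).submatrix (Fin.succ ∘ Fin.succ)
        (Fin.succAbove 1 ∘ Fin.succ) = tridiagonal n := by
      ext k l
      simp [tridiagonal_apply, Fin.succAbove]
    simp [submatrix_submatrix, corner, tridiagonal_apply]
  rw [det_succ_row_zero, Fin.sum_univ_succ, Fin.sum_univ_succ,
    sum_eq_zero fun j _ => by simp [tridiagonal_apply], Fin.succAbove_zero,
    tridiagonal_submatrix_succ, Fin.succ_zero_eq_one, minor]
  simp [tridiagonal_apply, sub_eq_add_neg]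

lemma det_tridiagonal_add_three (n : ℕ) : (tridiagonal (n + 3)).det = -(tridiagonal n).det := by
  rw [det_tridiagonal_add_two, det_tridiagonal_add_two]
  ring

lemma det_tridiagonal : ∀ n : ℕ, (tridiagonal n).det =
    if n % 3 = 0 then (-1) ^ (n / 3) else if n % 3 = 1 then (-1) ^ ((n - 1) / 3) else 0
  | 0 => by simp
  | 1 => by simp [tridiagonal_apply]
  | 2 => by simp [det_tridiagonal_add_two 0, tridiagonal_apply]
  | n + 3 => by
    rw [det_tridiagonal_add_three, det_tridiagonal n, Nat.add_mod_right,
      Nat.add_div_right _ three_pos]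
    split_ifs
    · ring
    · rw [show (n + 3 - 1) / 3 = (n - 1) / 3 + 1 by omega]
      ring
    · simp

end Motzkin

open Matrix in
theorem motzkin_hankel_det_shift_general (n : ℕ) :
    (Matrix.of fun i j : Fin n => (motzkin (i.1 + j.1 + 1) : ℤ)).det =
      if n % 3 = 0 then (-1) ^ (n / 3)
      else if n % 3 = 1 then (-1) ^ ((n - 1) / 3)
      else 0 := by
  rw [Motzkin.hankel_eq_pathMatrix_mul, det_mul, det_transpose, det_mul, Motzkin.det_pathMatrix,
    one_mul, one_mul, Motzkin.det_tridiagonal]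

theorem motzkin_hankel_det_shift (n : ℕ) (hn : 0 < n) :
    (Matrix.of fun i j : Fin n => (motzkin (i.1 + j.1 + 1) : ℤ)).det =
      if n % 3 = 0 then (-1) ^ (n / 3)
      else if n % 3 = 1 then (-1) ^ ((n - 1) / 3)
      else 0 :=
  motzkin_hankel_det_shift_general n
end

section
/- For all non-negative integers n, j, m with j ≤ n and integers l, the identity sum over r ≥ 0 of (-1)^r · binomial(n-r, r) · binomial(n-2r, j) · binomial(n-j-2r, l-r) equals binomial(n-l, j) · binomial(l+j, j) holds, where binomial coefficients with negative or out-of-range arguments are 0. -/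
/-! Trinomial revision rewrites the summand as
`binomial(l+j, j) · (-1)^r binomial(l, r) binomial(n-r, l+j)`, and the remaining alternating
sum is the inverse Chu–Vandermonde identity
`∑ r, (-1)^r binomial(L, r) binomial(n-r, m) = binomial(n-L, m-L)` for `L ≤ m`,
proved by induction on `L` with Pascal's rule. -/

/- Integer binomial coefficient: `chz a b = binomial(a,b)`, equal to `0` unless
`0 ≤ b ≤ a`. -/
def chz (a b : ℤ) : ℤ := if 0 ≤ b ∧ b ≤ a then (a.toNat.choose b.toNat : ℤ) else 0

open Finset

lemma chz_eq_zero_of_neg {a b : ℤ} (hb : b < 0) : chz a b = 0 := if_neg (by omega)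

lemma chz_eq_zero_of_lt {a b : ℤ} (hab : a < b) : chz a b = 0 := if_neg (by omega)

lemma chz_natCast (a b : ℕ) : chz a b = a.choose b := by
  unfold chz
  split_ifs with h
  · simp
  · rw [Nat.choose_eq_zero_of_lt (by omega), Nat.cast_zero]

/-- Pascal's rule. It fails at `a = -1, b = 0`, where the left side is `1` and the right `0`. -/
lemma chz_add_one (a b : ℤ) (h : 0 ≤ a ∨ 0 < b) :
    chz (a + 1) b = chz a b + chz a (b - 1) := by
  unfold chz
  split_ifs with h1 h2 h3 h2 h3 <;> try omega
  · rw [show (a + 1).toNat = a.toNat + 1 by omega, show b.toNat = (b - 1).toNat + 1 by omega,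
      Nat.choose_succ_succ, Nat.cast_add, add_comm]
  · simp [show b = 0 by omega]
  · obtain rfl : b = a + 1 := by omega
    rw [show (a + 1).toNat = a.toNat + 1 by omega, show (a + 1 - 1).toNat = a.toNat by omega,
      Nat.choose_self, Nat.choose_self, zero_add]

lemma chz_mul_sub_eq_mul (a b c : ℤ) :
    chz a b * chz (a - b) c = chz a (b + c) * chz (b + c) b := by
  unfold chz
  split_ifs with h1 h2 h3 h4 h3 h4 h3 h4 <;> try omega
  rw [show (a - b).toNat = a.toNat - b.toNat by omega,
    show (b + c).toNat = b.toNat + c.toNat by omega, ← Nat.cast_mul, ← Nat.cast_mul,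
    Nat.choose_mul (Nat.le_add_right _ _), Nat.add_sub_cancel_left]

lemma chz_add_symm (a b : ℤ) : chz (a + b) a = chz (a + b) b := by
  by_cases h : 0 ≤ a ∧ 0 ≤ b
  · lift a to ℕ using h.1
    lift b to ℕ using h.2
    rw [← Nat.cast_add, chz_natCast, chz_natCast, Nat.choose_symm_add]
  · rcases not_and_or.mp h with ha | hb
    · rw [chz_eq_zero_of_neg (by omega), chz_eq_zero_of_lt (by omega)]
    · rw [chz_eq_zero_of_lt (by omega), chz_eq_zero_of_neg (by omega)]

lemma chz_mul_sub_comm (m r j : ℤ) :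
    chz m r * chz (m - r) j = chz m j * chz (m - j) r := by
  rw [chz_mul_sub_eq_mul, chz_mul_sub_eq_mul, chz_add_symm, add_comm]

lemma sum_range_neg_one_pow_mul_chz_mul_chz (L : ℕ) (m n : ℤ) (hL : L ≤ m) :
    ∑ r ∈ range (L + 1), (-1 : ℤ) ^ r * chz L r * chz (n - r) m = chz (n - L) (m - L) := by
  induction L generalizing n with
  | zero => simp [chz]
  | succ L ih =>
    have hL' : (L : ℤ) ≤ m := by omega
    have hpascal (r : ℕ) : chz (L + 1 : ℕ) r = chz L r + chz L ((r : ℤ) - 1) := by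
      rw [Nat.cast_succ, chz_add_one _ _ (.inl L.cast_nonneg)]
    have hhead : ∑ r ∈ range (L + 2), (-1 : ℤ) ^ r * chz L r * chz (n - r) m
        = chz (n - L) (m - L) := by
      rw [sum_range_succ, ih n hL', chz_eq_zero_of_lt (a := L) (b := (L + 1 : ℕ)) (by omega),
        mul_zero, zero_mul, add_zero]
    have hshift : ∑ r ∈ range (L + 2), (-1 : ℤ) ^ r * chz L ((r : ℤ) - 1) * chz (n - r) m
        = -chz (n - 1 - L) (m - L) := by
      rw [sum_range_succ', ← ih (n - 1) hL', ← sum_neg_distrib, Nat.cast_zero, zero_sub,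
        chz_eq_zero_of_neg neg_one_lt_zero, mul_zero, zero_mul, add_zero]
      refine sum_congr rfl fun r _ => ?_
      rw [Nat.cast_succ, add_sub_cancel_right, pow_succ, sub_add_eq_sub_sub_swap]
      ring
    simp_rw [hpascal, mul_add, add_mul, sum_add_distrib]
    rw [hhead, hshift, show n - L = n - 1 - L + 1 by ring, chz_add_one _ _ (.inr (by omega))]
    push_cast
    ring_nf

lemma chz_summand_eq (n j l r : ℤ) :
    chz (n - r) r * chz (n - 2 * r) j * chz (n - j - 2 * r) (l - r)
      = chz (l + j) j * (chz l r * chz (n - r) (l + j)) := by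
  have h₁ := chz_mul_sub_eq_mul (n - 2 * r) j (l - r)
  have h₂ := chz_mul_sub_eq_mul (n - r) r (l + j - r)
  have h₃ := chz_mul_sub_comm (l + j) r j
  rw [show n - 2 * r - j = n - j - 2 * r by ring, show j + (l - r) = l + j - r by ring] at h₁
  rw [show n - r - r = n - 2 * r by ring, add_sub_cancel] at h₂
  rw [add_sub_cancel_right] at h₃
  rw [mul_assoc, h₁, ← mul_assoc, h₂, mul_assoc, h₃]
  ring

theorem alternating_sum_binomial_identity_general (n j : ℕ) (l : ℤ) :
    ∑ r ∈ Finset.range (n + 1),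
      (-1 : ℤ) ^ r * chz ((n : ℤ) - r) r * chz ((n : ℤ) - 2 * r) j *
        chz ((n : ℤ) - j - 2 * r) (l - r) =
      chz ((n : ℤ) - l) j * chz (l + j) j := by
  calc _ = chz (l + j) j *
          ∑ r ∈ range (n + 1), (-1 : ℤ) ^ r * chz l r * chz (n - r) (l + j) := by
        rw [mul_sum]
        refine sum_congr rfl fun r _ => ?_
        linear_combination (-1 : ℤ) ^ r * chz_summand_eq n j l r
    _ = _ := by
      rcases lt_or_ge l 0 with hl | hl
      · simp [chz_eq_zero_of_lt (a := l + j) (b := j) (by omega)]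
      lift l to ℕ using hl
      have hvanish_n (r : ℕ) (hr : n + 1 ≤ r) :
          (-1 : ℤ) ^ r * chz l r * chz (n - r) (l + j) = 0 := by
        rw [chz_eq_zero_of_lt (a := n - r) (b := l + j) (by omega), mul_zero]
      have hvanish_l (r : ℕ) (hr : l + 1 ≤ r) :
          (-1 : ℤ) ^ r * chz l r * chz (n - r) (l + j) = 0 := by
        rw [chz_eq_zero_of_lt (a := l) (by omega), mul_zero, zero_mul]
      rw [← eventually_constant_sum hvanish_n (n := n + l + 1) (by omega),
        eventually_constant_sum hvanish_l (by omega),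
        sum_range_neg_one_pow_mul_chz_mul_chz l _ _ (by omega), add_sub_cancel_left, mul_comm]

theorem alternating_sum_binomial_identity (n j : ℕ) (hj : j ≤ n) (l : ℤ) :
    ∑ r ∈ Finset.range (n + 1),
      (-1 : ℤ) ^ r * chz ((n : ℤ) - r) r * chz ((n : ℤ) - 2 * r) j *
        chz ((n : ℤ) - j - 2 * r) (l - r) =
      chz ((n : ℤ) - l) j * chz (l + j) j :=
  alternating_sum_binomial_identity_general n j l
end
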